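/- arXiv:1911.06244 — 11 statements merged into one kernel-verified Lean document; each statement's English description precedes it below -/
import Mathlib

section
/- Let X be a nonempty set, (S,·,0) a commutative semigroup with zero, and f : X → S a function such that for all x, y ∈ X, if f(x)·f(y) ≠ 0 then there exists z ∈ X with f(z) = f(x)·f(y). Then the graph Γ_{(S,f)}(X) is connected on its vertices with diameter at most 3; that is, any two vertices of Γ_{(S,f)}(X) are joined by a path in Γ_{(S,f)}(X) of length at most 3. -/
/-- `x` is a vertex of the graph `Γ_{(S,f)}(X)`: `f x ≠ 0` and there is some
`y ≠ x` with `f y ≠ 0` and `f x * f y = 0`. -/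
def IsVertexOf {X S : Type*} [Mul S] [Zero S] (f : X → S) (x : X) : Prop :=
  f x ≠ 0 ∧ ∃ y : X, y ≠ x ∧ f y ≠ 0 ∧ f x * f y = 0

/-- Theorem (diameter of the generalized zero-divisor graph `Γ_{(S,f)}(X)`):
if `S` is a commutative semigroup with zero and `f : X → S` satisfies that
whenever `f x * f y ≠ 0` there is `z` with `f z = f x * f y`, then any two
vertices of `Γ_{(S,f)}(X)` are joined by a path of length at most `3`. -/
theorem diam_le_three_of_image_closed
    {X S : Type*} [Nonempty X] [SemigroupWithZero S]
    (hcomm : ∀ a b : S, a * b = b * a)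
    (f : X → S)
    (hf : ∀ x y : X, f x * f y ≠ 0 → ∃ z : X, f z = f x * f y)
    (G : SimpleGraph X)
    (hG : ∀ x y : X, G.Adj x y ↔ x ≠ y ∧ f x ≠ 0 ∧ f y ≠ 0 ∧ f x * f y = 0) :
    ∀ x y : X, IsVertexOf f x → IsVertexOf f y →
      ∃ p : G.Walk x y, p.IsPath ∧ p.length ≤ 3 := by
  intro x y hx hy
  obtain ⟨hfx, a, hax, hfa, hxa⟩ := hx
  obtain ⟨hfy, b, hby, hfb, hyb⟩ := hy
  by_cases hxy : x = y
  · subst hxy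
    exact ⟨.nil, .nil, by simp⟩
  by_cases h0 : f x * f y = 0
  · refine ⟨.cons ((hG x y).mpr ⟨hxy, hfx, hfy, h0⟩) .nil, ?_, by simp⟩
    simp [SimpleGraph.Walk.isPath_def, hxy]
  by_cases hay : f a * f y = 0
  · -- path x — a — y
    have hane_y : a ≠ y := fun h => h0 (h ▸ hxa)
    have adj1 : G.Adj x a := (hG x a).mpr ⟨hax.symm, hfx, hfa, hxa⟩
    have adj2 : G.Adj a y := (hG a y).mpr ⟨hane_y, hfa, hfy, hay⟩
    refine ⟨.cons adj1 (.cons adj2 .nil), ?_, by simp⟩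
    simp [SimpleGraph.Walk.isPath_def, hxy, hax.symm, hane_y]
  by_cases hbx : f b * f x = 0
  · -- path x — b — y
    have hbne_x : b ≠ x := fun h => h0 (hcomm (f x) (f y) ▸ (h ▸ hyb))
    have adj1 : G.Adj x b := (hG x b).mpr ⟨hbne_x.symm, hfx, hfb, hcomm (f b) (f x) ▸ hbx⟩
    have adj2 : G.Adj b y := (hG b y).mpr ⟨hby, hfb, hfy, hcomm (f y) (f b) ▸ hyb⟩
    refine ⟨.cons adj1 (.cons adj2 .nil), ?_, by simp⟩
    simp [SimpleGraph.Walk.isPath_def, hxy, hbne_x.symm, hby]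
  have hab_ne : a ≠ b := by
    intro h
    exact hay (h ▸ (hcomm (f y) (f b) ▸ hyb))
  by_cases hab : f a * f b = 0
  · -- path x — a — b — y
    have hane_y : a ≠ y := fun h => h0 (h ▸ hxa)
    have hxne_b : x ≠ b := fun h => h0 (by rw [← h] at hyb; exact (hcomm (f x) (f y)).trans hyb)
    have adj1 : G.Adj x a := (hG x a).mpr ⟨hax.symm, hfx, hfa, hxa⟩
    have adj2 : G.Adj a b := (hG a b).mpr ⟨hab_ne, hfa, hfb, hab⟩
    have adj3 : G.Adj b y := (hG b y).mpr ⟨hby, hfb, hfy, hcomm (f y) (f b) ▸ hyb⟩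
    refine ⟨.cons adj1 (.cons adj2 (.cons adj3 .nil)), ?_, by simp⟩
    simp [SimpleGraph.Walk.isPath_def, hxy, hax.symm, hane_y, hab_ne, hxne_b, hby]
  · -- path x — c — y with f c = f a * f b
    obtain ⟨c, hc⟩ := hf a b hab
    have hfc : f c ≠ 0 := by rw [hc]; exact hab
    have hxc : f x * f c = 0 := by
      rw [hc, ← mul_assoc, hxa, zero_mul]
    have hcy : f c * f y = 0 := by
      rw [hc, mul_assoc, hcomm (f b) (f y), hyb, mul_zero]
    have hcne_x : c ≠ x := by
      intro h
      apply h0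
      rw [← h, hc, mul_assoc, hcomm (f b) (f y), hyb, mul_zero]
    have hcne_y : c ≠ y := by
      intro h
      apply h0
      rw [← h, hc, ← mul_assoc, hxa, zero_mul]
    have adj1 : G.Adj x c := (hG x c).mpr ⟨hcne_x.symm, hfx, hfc, hxc⟩
    have adj2 : G.Adj c y := (hG c y).mpr ⟨hcne_y, hfc, hfy, hcy⟩
    refine ⟨.cons adj1 (.cons adj2 .nil), ?_, by simp⟩
    simp [SimpleGraph.Walk.isPath_def, hxy, hcne_x.symm, hcne_y]
end

section
/- Let (S,·,0) be a commutative semigroup with zero. Then the zero-divisor graph Γ(S) is connected with diameter at most 3; that is, any two vertices of Γ(S) are joined by a path in Γ(S) of length at most 3. -/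
/-- `x` is a vertex of the zero-divisor graph `Γ(S)`: `x ≠ 0` and there is
some `y ≠ x` with `y ≠ 0` and `x * y = 0`. -/
def IsZeroDivisorVertex {S : Type*} [Mul S] [Zero S] (x : S) : Prop :=
  x ≠ 0 ∧ ∃ y : S, y ≠ x ∧ y ≠ 0 ∧ x * y = 0

/-- Theorem (DeMeyer–DeMeyer): if `S` is a commutative semigroup with zero,
then the zero-divisor graph `Γ(S)` is connected with diameter at most `3`;
that is, any two vertices of `Γ(S)` are joined by a path of length at most `3`. -/
theorem zeroDivisorGraph_diam_le_three
    {S : Type*} [SemigroupWithZero S]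
    (hcomm : ∀ a b : S, a * b = b * a)
    (G : SimpleGraph S)
    (hG : ∀ x y : S, G.Adj x y ↔ x ≠ y ∧ x ≠ 0 ∧ y ≠ 0 ∧ x * y = 0) :
    ∀ x y : S, IsZeroDivisorVertex x → IsZeroDivisorVertex y →
      ∃ p : G.Walk x y, p.IsPath ∧ p.length ≤ 3 := by
  intro x y hx hy
  obtain ⟨hx0, a, hax, ha0, hxa⟩ := hx
  obtain ⟨hy0, b, hby, hb0, hyb⟩ := hy
  by_cases hxy : x = y
  · subst hxy
    exact ⟨.nil, SimpleGraph.Walk.IsPath.nil, by simp⟩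
  by_cases h0 : x * y = 0
  · refine ⟨.cons ((hG x y).2 ⟨hxy, hx0, hy0, h0⟩) .nil, ?_, ?_⟩
    · simp [SimpleGraph.Walk.cons_isPath_iff, hxy]
    · simp
  have hay : a ≠ y := fun h => h0 (h ▸ hxa)
  have hbx : b ≠ x := fun h => h0 (by rw [hcomm]; exact h ▸ hyb)
  have hxay : G.Adj x a → G.Adj a y → ∃ p : G.Walk x y, p.IsPath ∧ p.length ≤ 3 := by
    intro h1 h2
    refine ⟨.cons h1 (.cons h2 .nil), ?_, ?_⟩
    · simp [SimpleGraph.Walk.cons_isPath_iff, h1, h2, hxy, hax.symm, hay]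
    · simp
  by_cases hab : a = b
  · subst hab
    exact hxay ((hG x a).2 ⟨hax.symm.symm ∘ Eq.symm, hx0, ha0, hxa⟩)
      ((hG a y).2 ⟨hay, ha0, hy0, by rw [hcomm]; exact hyb⟩)
  by_cases hab0 : a * b = 0
  · -- path x - a - b - y
    have h1 : G.Adj x a := (hG x a).2 ⟨fun h => hax h.symm, hx0, ha0, hxa⟩
    have h2 : G.Adj a b := (hG a b).2 ⟨hab, ha0, hb0, hab0⟩
    have h3 : G.Adj b y := (hG b y).2 ⟨hby, hb0, hy0, by rw [hcomm]; exact hyb⟩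
    refine ⟨.cons h1 (.cons h2 (.cons h3 .nil)), ?_, ?_⟩
    · simp [SimpleGraph.Walk.cons_isPath_iff, h1, h2, h3, hxy, hax.symm, hab, hay]
      exact ⟨hby, fun h => hbx h.symm⟩
    · simp
  · -- path x - a*b - y
    have hc0 : a * b ≠ 0 := hab0
    have hxc : x * (a * b) = 0 := by rw [← mul_assoc, hxa, zero_mul]
    have hcy : (a * b) * y = 0 := by rw [mul_assoc, hcomm b y, hyb, mul_zero]
    have hcx : a * b ≠ x := fun h => h0 (by rw [hcomm, ← h, hcomm]; exact hcy)
    have hcy' : a * b ≠ y := fun h => h0 (h ▸ hxc)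
    have h1 : G.Adj x (a * b) := (hG x (a * b)).2 ⟨fun h => hcx h.symm, hx0, hc0, hxc⟩
    have h2 : G.Adj (a * b) y := (hG (a * b) y).2 ⟨hcy', hc0, hy0, hcy⟩
    refine ⟨.cons h1 (.cons h2 .nil), ?_, ?_⟩
    · simp [SimpleGraph.Walk.cons_isPath_iff, h1, h2, hxy]
      exact ⟨hcy', fun h => hcx h.symm⟩
    · simp
end

section
/- Let X be a nonempty set and (S,·,0) a commutative semigroup with zero equipped with a partial order ≤ that is compatible with multiplication (x ≤ y implies x·z ≤ y·z for all x, y, z ∈ S) and positive (0 < x and 0 < y imply 0 < x·y). Let f : X → S be a function such that for all w, z ∈ X, if f(w)·f(z) ≠ 0 then there exists v ∈ X with f(w)·f(z) ≤ f(v), f(v) ≤ f(w), and f(v) ≤ f(z). Then the graph Γ_{(S,f)}(X) is connected on its vertices with diameter at most 3; that is, any two vertices of Γ_{(S,f)}(X) are joined by a path in Γ_{(S,f)}(X) of length at most 3. -/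
/-- Theorem: let `S` be a positive ordered commutative semigroup with zero
(the partial order is compatible with multiplication and positive) and let
`f : X → S` be such that whenever `f w * f z ≠ 0` there is `v ∈ X` with
`f w * f z ≤ f v`, `f v ≤ f w`, and `f v ≤ f z`.  Then any two vertices of
`Γ_{(S,f)}(X)` are joined by a path of length at most `3`. -/
theorem diam_le_three_of_positive_ordered
    {X S : Type*} [Nonempty X] [SemigroupWithZero S] [PartialOrder S]
    (hcomm : ∀ a b : S, a * b = b * a)
    (hcompat : ∀ x y z : S, x ≤ y → x * z ≤ y * z)
    (hpos : ∀ x y : S, 0 < x → 0 < y → 0 < x * y)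
    (f : X → S)
    (hf : ∀ w z : X, f w * f z ≠ 0 →
      ∃ v : X, f w * f z ≤ f v ∧ f v ≤ f w ∧ f v ≤ f z)
    (G : SimpleGraph X)
    (hG : ∀ x y : X, G.Adj x y ↔ x ≠ y ∧ f x ≠ 0 ∧ f y ≠ 0 ∧ f x * f y = 0) :
    ∀ x y : X, IsVertexOf f x → IsVertexOf f y →
      ∃ p : G.Walk x y, p.IsPath ∧ p.length ≤ 3 := by
  intro x y hx hy
  obtain ⟨hfx, a, hax, hfa, hxa0⟩ := hx
  obtain ⟨hfy, b, hby, hfb, hyb0⟩ := hy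
  by_cases hxy : x = y
  · subst hxy
    exact ⟨.nil, SimpleGraph.Walk.IsPath.nil, by simp⟩
  by_cases hxy0 : f x * f y = 0
  · have hadj : G.Adj x y := (hG x y).mpr ⟨hxy, hfx, hfy, hxy0⟩
    exact ⟨.cons hadj .nil, by simp [SimpleGraph.Walk.isPath_def, hxy], by simp⟩
  -- now f x * f y ≠ 0
  by_cases hab : a = b
  · -- path x - a - y
    subst hab
    have hay : a ≠ y := by
      intro h; subst h; exact hxy0 hxa0
    have h1 : G.Adj x a := (hG x a).mpr ⟨Ne.symm hax, hfx, hfa, hxa0⟩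
    have h2 : G.Adj a y := (hG a y).mpr ⟨hay, hfa, hfy, by rw [hcomm]; exact hyb0⟩
    refine ⟨.cons h1 (.cons h2 .nil), ?_, by simp⟩
    simp [SimpleGraph.Walk.isPath_def, Ne.symm hax, hxy, hay]
  by_cases hab0 : f a * f b = 0
  · -- path x - a - b - y
    have hay : a ≠ y := by
      intro h; subst h; exact hxy0 hxa0
    have hxb : x ≠ b := by
      intro h; subst h
      exact hxy0 (by rw [hcomm]; exact hyb0)
    have h1 : G.Adj x a := (hG x a).mpr ⟨Ne.symm hax, hfx, hfa, hxa0⟩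
    have h2 : G.Adj a b := (hG a b).mpr ⟨hab, hfa, hfb, hab0⟩
    have h3 : G.Adj b y := (hG b y).mpr ⟨hby, hfb, hfy, by rw [hcomm]; exact hyb0⟩
    refine ⟨.cons h1 (.cons h2 (.cons h3 .nil)), ?_, by simp⟩
    simp [SimpleGraph.Walk.isPath_def, Ne.symm hax, hxy, hxb, hab, hay, hby]
  · -- f a * f b ≠ 0; get middle vertex v, path x - v - y
    obtain ⟨v, hlev, hva, hvb⟩ := hf a b hab0
    have hvx0 : f v * f x = 0 := by
      have h1 : f v * f x ≤ f a * f x := hcompat _ _ _ hva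
      have h2 : f a * f x = 0 := by rw [hcomm]; exact hxa0
      have h3 : (f a * f b) * f x ≤ f v * f x := hcompat _ _ _ hlev
      have h4 : (f a * f b) * f x = 0 := by
        rw [hcomm (f a) (f b), mul_assoc, h2, mul_zero]
      exact le_antisymm (h2 ▸ h1) (h4 ▸ h3)
    have hvy0 : f v * f y = 0 := by
      have h1 : f v * f y ≤ f b * f y := hcompat _ _ _ hvb
      have h2 : f b * f y = 0 := by rw [hcomm]; exact hyb0
      have h3 : (f a * f b) * f y ≤ f v * f y := hcompat _ _ _ hlev
      have h4 : (f a * f b) * f y = 0 := by rw [mul_assoc, h2, mul_zero]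
      exact le_antisymm (h2 ▸ h1) (h4 ▸ h3)
    have hfv : f v ≠ 0 := by
      intro h
      have h1' : f v * f b ≤ f a * f b := hcompat _ _ _ hva
      have h2' : f v * f v ≤ f v * f b := by
        rw [hcomm (f v) (f v), hcomm (f v) (f b)]; exact hcompat _ _ _ hvb
      have hle : f v * f v ≤ f a * f b := le_trans h2' h1'
      rw [h] at hle hlev
      rw [mul_zero] at hle
      exact hab0 (le_antisymm hlev hle)
    have hvx : v ≠ x := by
      intro h; subst h; exact hxy0 hvy0
    have hvy : v ≠ y := by
      intro h; subst h; exact hxy0 (by rw [hcomm]; exact hvx0)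
    have h1 : G.Adj x v := (hG x v).mpr ⟨Ne.symm hvx, hfx, hfv, by rw [hcomm]; exact hvx0⟩
    have h2 : G.Adj v y := (hG v y).mpr ⟨hvy, hfv, hfy, hvy0⟩
    refine ⟨.cons h1 (.cons h2 .nil), ?_, by simp⟩
    simp [SimpleGraph.Walk.isPath_def, Ne.symm hvx, hxy, hvy]
end

section
/- Let S be a commutative semiring with a nonzero identity and M a unital S-semimodule that has the annihilator condition, i.e., for all x, y ∈ M there is z ∈ M such that Ann({x,y}) = Ann(z). Consider the simple graph on M in which distinct x, y ∈ M are adjacent if and only if Ann(x) ≠ (0), Ann(y) ≠ (0), and Ann(x) ∩ Ann(y) = (0); its vertices are the elements x ∈ M with Ann(x) ≠ (0) that are adjacent to some other element. Then this graph is connected on its vertices with diameter at most 3; that is, any two vertices are joined by a path of length at most 3. -/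
/-- The annihilator ideal `Ann(x) = {s ∈ S : s • x = 0}` of an element `x`
of a semimodule `M` over a commutative semiring `S`. -/
def annOf {S M : Type*} [CommSemiring S] [AddCommMonoid M] [Module S M]
    (x : M) : Ideal S where
  carrier := {s : S | s • x = 0}
  zero_mem' := zero_smul S x
  add_mem' := by
    intro a b ha hb
    simp only [Set.mem_setOf_eq] at *
    rw [add_smul, ha, hb, add_zero]
  smul_mem' := by
    intro c a ha
    simp only [Set.mem_setOf_eq, smul_eq_mul] at *
    rw [mul_smul, ha, smul_zero]

/-- Theorem: let `S` be a commutative semiring with a nonzero identity and `M`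
a unital `S`-semimodule with the annihilator condition (for all `x y : M`
there is `z : M` with `Ann(x) ∩ Ann(y) = Ann(z)`).  In the graph on `M` in
which distinct `x, y` are adjacent iff `Ann(x) ≠ (0)`, `Ann(y) ≠ (0)` and
`Ann(x) ∩ Ann(y) = (0)`, any two vertices are joined by a path of length at
most `3`. -/
theorem annihilatorGraph_diam_le_three
    {S M : Type*} [CommSemiring S] [Nontrivial S] [AddCommMonoid M] [Module S M]
    (hac : ∀ x y : M, ∃ z : M, annOf (S := S) x ⊓ annOf y = annOf z)
    (G : SimpleGraph M)
    (hG : ∀ x y : M, G.Adj x y ↔ x ≠ y ∧ annOf (S := S) x ≠ ⊥ ∧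
      annOf (S := S) y ≠ ⊥ ∧ annOf (S := S) x ⊓ annOf y = ⊥) :
    ∀ x y : M,
      (annOf (S := S) x ≠ ⊥ ∧
        ∃ x' : M, x' ≠ x ∧ annOf (S := S) x' ≠ ⊥ ∧ annOf (S := S) x ⊓ annOf x' = ⊥) →
      (annOf (S := S) y ≠ ⊥ ∧
        ∃ y' : M, y' ≠ y ∧ annOf (S := S) y' ≠ ⊥ ∧ annOf (S := S) y ⊓ annOf y' = ⊥) →
      ∃ p : G.Walk x y, p.IsPath ∧ p.length ≤ 3 := by
  intro x y ⟨hx, x', hx'x, hx'bot, hxx'⟩ ⟨hy, y', hy'y, hy'bot, hyy'⟩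
  by_cases hxy : x = y
  · subst hxy
    exact ⟨SimpleGraph.Walk.nil, SimpleGraph.Walk.IsPath.nil, by simp⟩
  by_cases hmeet : annOf (S := S) x ⊓ annOf y = ⊥
  · have adj : G.Adj x y := (hG x y).mpr ⟨hxy, hx, hy, hmeet⟩
    refine ⟨SimpleGraph.Walk.cons adj SimpleGraph.Walk.nil, ?_, by simp⟩
    simp [SimpleGraph.Walk.isPath_def, hxy]
  obtain ⟨z, hz⟩ := hac x' y'
  by_cases hzbot : annOf (S := S) z = ⊥
  · -- Ann x' ⊓ Ann y' = ⊥, path x - x' - y' - y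
    have hx'y' : annOf (S := S) x' ⊓ annOf y' = ⊥ := hz.trans hzbot
    have hx'ney' : x' ≠ y' := by
      intro h
      subst h
      apply hx'bot
      simpa using hx'y'
    have hxney' : x ≠ y' := by
      intro h
      apply hmeet
      rw [h, inf_comm]
      exact hyy'
    have hx'ney : x' ≠ y := by
      intro h
      apply hmeet
      rw [← h]
      exact hxx'
    have a1 : G.Adj x x' := (hG x x').mpr ⟨Ne.symm hx'x, hx, hx'bot, hxx'⟩
    have a2 : G.Adj x' y' := (hG x' y').mpr ⟨hx'ney', hx'bot, hy'bot, hx'y'⟩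
    have a3 : G.Adj y' y := (hG y' y).mpr ⟨hy'y, hy'bot, hy, by rw [inf_comm]; exact hyy'⟩
    refine ⟨SimpleGraph.Walk.cons a1 (SimpleGraph.Walk.cons a2
      (SimpleGraph.Walk.cons a3 SimpleGraph.Walk.nil)), ?_, by simp⟩
    simp [SimpleGraph.Walk.isPath_def, Ne.symm hx'x, hxney', hxy, hx'ney', hx'ney, hy'y]
  · -- Ann z ≠ ⊥, path x - z - y
    have hzx' : annOf (S := S) z ≤ annOf x' := by rw [← hz]; exact inf_le_left
    have hzy' : annOf (S := S) z ≤ annOf y' := by rw [← hz]; exact inf_le_right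
    have hxz : annOf (S := S) x ⊓ annOf z = ⊥ :=
      le_bot_iff.mp (le_trans (inf_le_inf_left _ hzx') (le_of_eq hxx'))
    have hzy : annOf (S := S) z ⊓ annOf y = ⊥ := by
      rw [inf_comm]
      exact le_bot_iff.mp (le_trans (inf_le_inf_left _ hzy') (le_of_eq hyy'))
    have hxnez : x ≠ z := by
      intro h
      apply hx
      rw [h] at hxz ⊢
      simpa using hxz
    have hzney : z ≠ y := by
      intro h
      apply hy
      rw [← h] at hzy ⊢
      simpa using hzy
    have a1 : G.Adj x z := (hG x z).mpr ⟨hxnez, hx, hzbot, hxz⟩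
    have a2 : G.Adj z y := (hG z y).mpr ⟨hzney, hzbot, hy, hzy⟩
    refine ⟨SimpleGraph.Walk.cons a1 (SimpleGraph.Walk.cons a2 SimpleGraph.Walk.nil), ?_, by simp⟩
    simp [SimpleGraph.Walk.isPath_def, hxnez, hxy, hzney]
end

section
/- Let S be a commutative monoid with zero and M a unital pointed S-act, i.e., a set with a distinguished element 0_M and an action satisfying (st)·x = s·(t·x), 1·x = x, s·0_M = 0_M, and 0_S·x = 0_M. Let 𝒞 be a nonempty collection of nonempty subsets of M that is closed under union. Consider the simple graph on 𝒞 in which distinct P, Q ∈ 𝒞 are adjacent if and only if Ann(P) ≠ {0_S}, Ann(Q) ≠ {0_S}, and Ann(P) ∩ Ann(Q) = {0_S}; its vertices are the members P ∈ 𝒞 with Ann(P) ≠ {0_S} that are adjacent to some other member. If this graph is nonempty, then it is connected on its vertices with diameter at most 3; that is, any two vertices are joined by a path of length at most 3. -/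
/-- The annihilator `Ann(P) = {s ∈ S : s • x = 0 for all x ∈ P}` of a subset
`P` of a pointed `S`-act `M`. -/
def actAnn (S : Type*) {M : Type*} [SMul S M] [Zero M] (P : Set M) : Set S :=
  {s : S | ∀ x ∈ P, s • x = 0}

lemma zero_mem_actAnn {S M : Type*} [MonoidWithZero S] [Zero M] [MulActionWithZero S M]
    (P : Set M) : (0 : S) ∈ actAnn S P := fun x _ => zero_smul S x

lemma actAnn_union {S M : Type*} [SMul S M] [Zero M] (P Q : Set M) :
    actAnn S (P ∪ Q) = actAnn S P ∩ actAnn S Q := by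
  ext s
  simp only [actAnn, Set.mem_setOf_eq, Set.mem_inter_iff, Set.mem_union]
  constructor
  · intro h; exact ⟨fun x hx => h x (Or.inl hx), fun x hx => h x (Or.inr hx)⟩
  · rintro ⟨h1, h2⟩ x (hx | hx)
    exacts [h1 x hx, h2 x hx]

/-- Theorem: let `S` be a commutative monoid with zero and `M` a unital pointed
`S`-act.  Let `𝒞` be a nonempty collection of nonempty subsets of `M` closed
under union.  In the graph on `𝒞` in which distinct `P, Q` are adjacent iff
`Ann(P) ≠ {0}`, `Ann(Q) ≠ {0}` and `Ann(P) ∩ Ann(Q) = {0}`, if the graph is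
nonempty then any two vertices are joined by a path of length at most `3`. -/
theorem actAnnGraph_diam_le_three
    {S M : Type*} [CommMonoidWithZero S] [Zero M] [MulActionWithZero S M]
    (𝒞 : Set (Set M)) (h𝒞ne : 𝒞.Nonempty)
    (h𝒞 : ∀ P ∈ 𝒞, P.Nonempty)
    (h𝒞union : ∀ P ∈ 𝒞, ∀ Q ∈ 𝒞, P ∪ Q ∈ 𝒞)
    (G : SimpleGraph 𝒞)
    (hG : ∀ P Q : 𝒞, G.Adj P Q ↔ P ≠ Q ∧ actAnn S (P : Set M) ≠ {0} ∧
      actAnn S (Q : Set M) ≠ {0} ∧ actAnn S (P : Set M) ∩ actAnn S (Q : Set M) = {0})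
    (hnonempty : ∃ P Q : 𝒞, G.Adj P Q) :
    ∀ P Q : 𝒞,
      (actAnn S (P : Set M) ≠ {0} ∧ ∃ P' : 𝒞, P' ≠ P ∧ actAnn S (P' : Set M) ≠ {0} ∧
        actAnn S (P : Set M) ∩ actAnn S (P' : Set M) = {0}) →
      (actAnn S (Q : Set M) ≠ {0} ∧ ∃ Q' : 𝒞, Q' ≠ Q ∧ actAnn S (Q' : Set M) ≠ {0} ∧
        actAnn S (Q : Set M) ∩ actAnn S (Q' : Set M) = {0}) →
      ∃ p : G.Walk P Q, p.IsPath ∧ p.length ≤ 3 := by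
  rintro P Q ⟨hP, P', hP'P, hP'ann, hPP'⟩ ⟨hQ, Q', hQ'Q, hQ'ann, hQQ'⟩
  by_cases hPQ : P = Q
  · subst hPQ
    exact ⟨SimpleGraph.Walk.nil, by simp, by simp⟩
  by_cases h1 : actAnn S (P : Set M) ∩ actAnn S (Q : Set M) = {0}
  · have adj : G.Adj P Q := (hG P Q).mpr ⟨hPQ, hP, hQ, h1⟩
    refine ⟨SimpleGraph.Walk.cons adj SimpleGraph.Walk.nil, ?_, by simp⟩
    simp [SimpleGraph.Walk.cons_isPath_iff, hPQ]
  by_cases h2 : actAnn S (P' : Set M) ∩ actAnn S (Q : Set M) = {0}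
  · -- path P — P' — Q
    have hP'Q : P' ≠ Q := by rintro rfl; exact h1 hPP'
    have adj1 : G.Adj P P' := (hG P P').mpr ⟨Ne.symm hP'P, hP, hP'ann, hPP'⟩
    have adj2 : G.Adj P' Q := (hG P' Q).mpr ⟨hP'Q, hP'ann, hQ, h2⟩
    refine ⟨SimpleGraph.Walk.cons adj1 (SimpleGraph.Walk.cons adj2 SimpleGraph.Walk.nil),
      ?_, by simp⟩
    simp [SimpleGraph.Walk.cons_isPath_iff, hPQ, hP'Q, Ne.symm hP'P]
  by_cases h3 : actAnn S (P : Set M) ∩ actAnn S (Q' : Set M) = {0}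
  · -- path P — Q' — Q
    have hQ'P : Q' ≠ P := by
      rintro rfl; exact h1 (by rw [Set.inter_comm]; exact hQQ')
    have adj1 : G.Adj P Q' := (hG P Q').mpr ⟨Ne.symm hQ'P, hP, hQ'ann, h3⟩
    have adj2 : G.Adj Q' Q := (hG Q' Q).mpr
      ⟨hQ'Q, hQ'ann, hQ, by rw [Set.inter_comm]; exact hQQ'⟩
    refine ⟨SimpleGraph.Walk.cons adj1 (SimpleGraph.Walk.cons adj2 SimpleGraph.Walk.nil),
      ?_, by simp⟩
    simp [SimpleGraph.Walk.cons_isPath_iff, hPQ, hQ'Q, Ne.symm hQ'P]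
  by_cases h4 : actAnn S (P' : Set M) ∩ actAnn S (Q' : Set M) = {0}
  · -- path P — P' — Q' — Q
    have hP'Q : P' ≠ Q := by rintro rfl; exact h1 hPP'
    have hQ'P : Q' ≠ P := by
      rintro rfl; exact h1 (by rw [Set.inter_comm]; exact hQQ')
    have hP'Q' : P' ≠ Q' := by
      rintro rfl
      exact hP'ann (by rw [← Set.inter_self (actAnn S (P' : Set M))]; exact h4)
    have adj1 : G.Adj P P' := (hG P P').mpr ⟨Ne.symm hP'P, hP, hP'ann, hPP'⟩
    have adj2 : G.Adj P' Q' := (hG P' Q').mpr ⟨hP'Q', hP'ann, hQ'ann, h4⟩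
    have adj3 : G.Adj Q' Q := (hG Q' Q).mpr
      ⟨hQ'Q, hQ'ann, hQ, by rw [Set.inter_comm]; exact hQQ'⟩
    refine ⟨SimpleGraph.Walk.cons adj1 (SimpleGraph.Walk.cons adj2
      (SimpleGraph.Walk.cons adj3 SimpleGraph.Walk.nil)), ?_, by simp⟩
    simp [SimpleGraph.Walk.cons_isPath_iff, hPQ, hP'Q, hP'Q', hQ'Q,
      Ne.symm hP'P, Ne.symm hQ'P]
  · -- path P — (P' ∪ Q') — Q
    set R : 𝒞 := ⟨(P' : Set M) ∪ (Q' : Set M), h𝒞union _ P'.2 _ Q'.2⟩ with hRdef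
    have hRann : actAnn S (R : Set M) = actAnn S (P' : Set M) ∩ actAnn S (Q' : Set M) :=
      actAnn_union _ _
    have hRne : actAnn S (R : Set M) ≠ {0} := by rw [hRann]; exact h4
    have hPR : actAnn S (P : Set M) ∩ actAnn S (R : Set M) = {0} := by
      apply subset_antisymm
      · rw [hRann, ← hPP']
        exact fun s ⟨hs1, hs2, _⟩ => ⟨hs1, hs2⟩
      · rw [Set.singleton_subset_iff]
        exact ⟨zero_mem_actAnn _, zero_mem_actAnn _⟩
    have hRQ : actAnn S (R : Set M) ∩ actAnn S (Q : Set M) = {0} := by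
      apply subset_antisymm
      · rw [hRann, ← hQQ']
        exact fun s ⟨⟨_, hs2⟩, hs3⟩ => ⟨hs3, hs2⟩
      · rw [Set.singleton_subset_iff]
        exact ⟨zero_mem_actAnn _, zero_mem_actAnn _⟩
    have hRneP : P ≠ R := by
      intro h
      rw [← h] at hPR
      exact hP (by rwa [Set.inter_self] at hPR)
    have hRneQ : R ≠ Q := by
      intro h
      rw [h] at hRQ
      exact hQ (by rwa [Set.inter_self] at hRQ)
    have adj1 : G.Adj P R := (hG P R).mpr ⟨hRneP, hP, hRne, hPR⟩
    have adj2 : G.Adj R Q := (hG R Q).mpr ⟨hRneQ, hRne, hQ, hRQ⟩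
    refine ⟨SimpleGraph.Walk.cons adj1 (SimpleGraph.Walk.cons adj2 SimpleGraph.Walk.nil),
      ?_, by simp⟩
    simp [SimpleGraph.Walk.cons_isPath_iff, hPQ, hRneP, hRneQ]
end

section
/- Let S be a commutative semiring with a nonzero identity and M a content S-semimodule, i.e., x ∈ c(x)M for all x ∈ M, where c(x) is the intersection of all ideals I of S with x ∈ IM (so that each c(x) is a finitely generated ideal of S). Suppose the content function c, viewed as a map from M to the set of finitely generated ideals of S, is onto. Consider the simple graph on M in which distinct x, y ∈ M are adjacent if and only if c(x) ≠ (0), c(y) ≠ (0), and c(x)c(y) = (0); its vertices are the elements x ∈ M with c(x) ≠ (0) that are adjacent to some other element. If this graph is nonempty, then it is connected on its vertices with diameter at most 3; that is, any two vertices are joined by a path of length at most 3. -/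
/-- The content `c(x)` of an element `x` of a semimodule `M` over a
commutative semiring `S`: the intersection of all ideals `I` of `S` with
`x ∈ IM`. -/
def contentOf (S : Type*) {M : Type*} [CommSemiring S] [AddCommMonoid M]
    [Module S M] (x : M) : Ideal S :=
  sInf {I : Ideal S | x ∈ I • (⊤ : Submodule S M)}

/-- If `x ∈ c(x)M`, then `c(x)` is a finitely generated ideal. -/
theorem contentOf_fg {S : Type*} {M : Type*} [CommSemiring S] [AddCommMonoid M]
    [Module S M] {x : M} (h : x ∈ contentOf S x • (⊤ : Submodule S M)) :
    (contentOf S x).FG := by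
  set c := contentOf S x with hc
  have h' : x ∈ c • Submodule.span S (Set.range (id : M → M)) := by
    simpa [Set.range_id, Submodule.span_univ] using h
  classical
  obtain ⟨a, ha, hsum⟩ := (Submodule.mem_ideal_smul_span_iff_exists_sum c id x).1 h'
  set J : Ideal S := Ideal.span ↑(a.support.image a) with hJ
  have hxJ : x ∈ J • (⊤ : Submodule S M) := by
    rw [← hsum]
    refine Submodule.sum_mem _ fun i hi => ?_
    exact Submodule.smul_mem_smul
      (Ideal.subset_span (Finset.mem_coe.2 (Finset.mem_image.2 ⟨i, hi, rfl⟩))) trivial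
  have h1 : c ≤ J := sInf_le hxJ
  have h2 : J ≤ c := by
    rw [hJ, Ideal.span_le]
    intro s hs
    obtain ⟨i, _, rfl⟩ := Finset.mem_image.1 (Finset.mem_coe.1 hs)
    exact ha i
  rw [hc] at h1 h2 ⊢
  rw [le_antisymm h1 h2]
  exact ⟨a.support.image a, rfl⟩

/-- Theorem: let `S` be a commutative semiring with a nonzero identity and `M`
a content `S`-semimodule (`x ∈ c(x)M` for all `x`) such that the content
function, viewed as a map from `M` to the finitely generated ideals of `S`,
is onto.  In the graph on `M` in which distinct `x, y` are adjacent iff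
`c(x) ≠ (0)`, `c(y) ≠ (0)` and `c(x)c(y) = (0)`, if the graph is nonempty then
any two vertices are joined by a path of length at most `3`. -/
theorem contentGraph_diam_le_three
    {S M : Type*} [CommSemiring S] [Nontrivial S] [AddCommMonoid M] [Module S M]
    (hcontent : ∀ x : M, x ∈ contentOf S x • (⊤ : Submodule S M))
    (hsurj : ∀ I : Ideal S, I.FG → ∃ x : M, contentOf S x = I)
    (G : SimpleGraph M)
    (hG : ∀ x y : M, G.Adj x y ↔ x ≠ y ∧ contentOf S x ≠ ⊥ ∧
      contentOf S y ≠ ⊥ ∧ contentOf S x * contentOf S y = ⊥)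
    (hnonempty : ∃ x y : M, G.Adj x y) :
    ∀ x y : M,
      (contentOf S x ≠ ⊥ ∧ ∃ x' : M, x' ≠ x ∧ contentOf S x' ≠ ⊥ ∧
        contentOf S x * contentOf S x' = ⊥) →
      (contentOf S y ≠ ⊥ ∧ ∃ y' : M, y' ≠ y ∧ contentOf S y' ≠ ⊥ ∧
        contentOf S y * contentOf S y' = ⊥) →
      ∃ p : G.Walk x y, p.IsPath ∧ p.length ≤ 3 := by
  rintro x y ⟨hx, x', hx'x, hx'0, hxx'⟩ ⟨hy, y', hy'y, hy'0, hyy'⟩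
  by_cases hxy : x = y
  · subst hxy
    exact ⟨SimpleGraph.Walk.nil, by simp, by simp⟩
  by_cases h1 : contentOf S x * contentOf S y = ⊥
  · -- direct edge
    have hadj : G.Adj x y := (hG x y).2 ⟨hxy, hx, hy, h1⟩
    exact ⟨SimpleGraph.Walk.cons hadj SimpleGraph.Walk.nil,
      by simp [SimpleGraph.Walk.isPath_def, hxy], by simp⟩
  by_cases h2 : contentOf S x' * contentOf S y = ⊥
  · -- path x - x' - y
    have hx'y : x' ≠ y := by rintro rfl; exact h1 hxx'
    have e1 : G.Adj x x' := (hG x x').2 ⟨Ne.symm hx'x, hx, hx'0, hxx'⟩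
    have e2 : G.Adj x' y := (hG x' y).2 ⟨hx'y, hx'0, hy, h2⟩
    refine ⟨SimpleGraph.Walk.cons e1 (SimpleGraph.Walk.cons e2 SimpleGraph.Walk.nil),
      ?_, by simp⟩
    simp [SimpleGraph.Walk.isPath_def, Ne.symm hx'x, hxy, hx'y]
  by_cases h3 : contentOf S x * contentOf S y' = ⊥
  · -- path x - y' - y
    have hxy' : x ≠ y' := by
      rintro rfl
      rw [mul_comm] at hyy'
      exact h1 hyy'
    have e1 : G.Adj x y' := (hG x y').2 ⟨hxy', hx, hy'0, h3⟩
    have e2 : G.Adj y' y := (hG y' y).2 ⟨hy'y, hy'0, hy, by rw [mul_comm]; exact hyy'⟩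
    refine ⟨SimpleGraph.Walk.cons e1 (SimpleGraph.Walk.cons e2 SimpleGraph.Walk.nil),
      ?_, by simp⟩
    simp [SimpleGraph.Walk.isPath_def, hxy', hxy, hy'y]
  by_cases h4 : contentOf S x' * contentOf S y' = ⊥
  · -- path x - x' - y' - y
    have hx'y' : x' ≠ y' := by
      rintro rfl
      rw [mul_comm] at h2
      exact h2 hyy'
    have hxy' : x ≠ y' := by
      rintro rfl
      rw [mul_comm] at hyy'
      exact h1 hyy'
    have hx'y : x' ≠ y := by rintro rfl; exact h1 hxx'
    have e1 : G.Adj x x' := (hG x x').2 ⟨Ne.symm hx'x, hx, hx'0, hxx'⟩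
    have e2 : G.Adj x' y' := (hG x' y').2 ⟨hx'y', hx'0, hy'0, h4⟩
    have e3 : G.Adj y' y := (hG y' y).2 ⟨hy'y, hy'0, hy, by rw [mul_comm]; exact hyy'⟩
    refine ⟨SimpleGraph.Walk.cons e1 (SimpleGraph.Walk.cons e2
      (SimpleGraph.Walk.cons e3 SimpleGraph.Walk.nil)), ?_, by simp⟩
    simp [SimpleGraph.Walk.isPath_def, Ne.symm hx'x, hxy, hxy', hx'y, hx'y', hy'y]
  · -- middle vertex z with c(z) = c(x')c(y')
    obtain ⟨z, hz⟩ := hsurj (contentOf S x' * contentOf S y')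
      (Submodule.FG.mul (contentOf_fg (hcontent x')) (contentOf_fg (hcontent y')))
    have hz0 : contentOf S z ≠ ⊥ := by rw [hz]; exact h4
    have hzx : contentOf S x * contentOf S z = ⊥ := by
      rw [hz, ← mul_assoc, hxx', Ideal.bot_mul]
    have hzy : contentOf S z * contentOf S y = ⊥ := by
      rw [hz, mul_assoc, mul_comm (contentOf S y'), hyy', Ideal.mul_bot]
    have hxz : x ≠ z := by rintro rfl; exact h1 hzy
    have hzy2 : z ≠ y := by rintro rfl; exact h1 hzx
    have e1 : G.Adj x z := (hG x z).2 ⟨hxz, hx, hz0, hzx⟩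
    have e2 : G.Adj z y := (hG z y).2 ⟨hzy2, hz0, hy, hzy⟩
    refine ⟨SimpleGraph.Walk.cons e1 (SimpleGraph.Walk.cons e2 SimpleGraph.Walk.nil),
      ?_, by simp⟩
    simp [SimpleGraph.Walk.isPath_def, hxz, hxy, hzy2]
end

section
/- Let S be a commutative semiring with a nonzero identity and M a unital S-semimodule. Consider the simple graph on the set Sub(M) of S-subsemimodules of M in which distinct N, K ∈ Sub(M) are adjacent if and only if [N:M] ≠ (0), [K:M] ≠ (0), and [N:M]·[K:M] = (0); its vertices are the subsemimodules N with [N:M] ≠ (0) that are adjacent to some other subsemimodule. If this graph is nonempty, then it is connected on its vertices with diameter at most 3; that is, any two vertices are joined by a path of length at most 3. -/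
/-- The residuated ideal `[N : M] = {s ∈ S : s • m ∈ N for all m ∈ M}` of a
subsemimodule `N` of a semimodule `M` over a commutative semiring `S`. -/
def residuatedIdeal {S M : Type*} [CommSemiring S] [AddCommMonoid M]
    [Module S M] (N : Submodule S M) : Ideal S where
  carrier := {s : S | ∀ m : M, s • m ∈ N}
  zero_mem' := by
    intro m
    rw [zero_smul]
    exact N.zero_mem
  add_mem' := by
    intro a b ha hb m
    rw [add_smul]
    exact N.add_mem (ha m) (hb m)
  smul_mem' := by
    intro c a ha m
    simp only [smul_eq_mul, Set.mem_setOf_eq] at *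
    rw [mul_smul]
    exact N.smul_mem c (ha m)

/-- Theorem: let `S` be a commutative semiring with a nonzero identity and `M`
a unital `S`-semimodule.  In the graph on `Sub(M)` in which distinct `N, K`
are adjacent iff `[N:M] ≠ (0)`, `[K:M] ≠ (0)` and `[N:M]·[K:M] = (0)`, if the
graph is nonempty then any two vertices are joined by a path of length at
most `3`. -/
theorem residuatedGraph_semimodule_diam_le_three
    {S M : Type*} [CommSemiring S] [Nontrivial S] [AddCommMonoid M] [Module S M]
    (G : SimpleGraph (Submodule S M))
    (hG : ∀ N K : Submodule S M, G.Adj N K ↔ N ≠ K ∧ residuatedIdeal N ≠ ⊥ ∧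
      residuatedIdeal K ≠ ⊥ ∧ residuatedIdeal N * residuatedIdeal K = ⊥)
    (hnonempty : ∃ N K : Submodule S M, G.Adj N K) :
    ∀ N K : Submodule S M,
      (residuatedIdeal N ≠ ⊥ ∧ ∃ N' : Submodule S M, N' ≠ N ∧
        residuatedIdeal N' ≠ ⊥ ∧ residuatedIdeal N * residuatedIdeal N' = ⊥) →
      (residuatedIdeal K ≠ ⊥ ∧ ∃ K' : Submodule S M, K' ≠ K ∧
        residuatedIdeal K' ≠ ⊥ ∧ residuatedIdeal K * residuatedIdeal K' = ⊥) →
      ∃ p : G.Walk N K, p.IsPath ∧ p.length ≤ 3 := by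
  intro N K hN hK
  obtain ⟨hA, N', hN'N, hA', hAA'⟩ := hN
  obtain ⟨hB, K', hK'K, hB', hBB'⟩ := hK
  have ann_le : ∀ X : Submodule S M,
      residuatedIdeal (⊥ : Submodule S M) ≤ residuatedIdeal X := by
    intro X s hs m
    have h := hs m
    rw [Submodule.mem_bot] at h
    rw [h]
    exact X.zero_mem
  by_cases hNK : N = K
  · subst hNK
    exact ⟨SimpleGraph.Walk.nil, SimpleGraph.Walk.IsPath.nil, by simp⟩
  by_cases hAB : residuatedIdeal N * residuatedIdeal K = ⊥
  · refine ⟨SimpleGraph.Walk.cons ((hG N K).mpr ⟨hNK, hA, hB, hAB⟩)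
      SimpleGraph.Walk.nil, ?_, by simp⟩
    simp [SimpleGraph.Walk.isPath_def, hNK]
  · have mid : ∀ W : Submodule S M, W ≠ N → W ≠ K → residuatedIdeal W ≠ ⊥ →
        residuatedIdeal N * residuatedIdeal W = ⊥ →
        residuatedIdeal W * residuatedIdeal K = ⊥ →
        ∃ p : G.Walk N K, p.IsPath ∧ p.length ≤ 3 := by
      intro W h1 h2 h3 h4 h5
      refine ⟨SimpleGraph.Walk.cons ((hG N W).mpr ⟨h1.symm, hA, h3, h4⟩)
        (SimpleGraph.Walk.cons ((hG W K).mpr ⟨h2, h3, hB, h5⟩)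
          SimpleGraph.Walk.nil), ?_, by simp⟩
      simp [SimpleGraph.Walk.isPath_def]
      exact ⟨⟨fun h => h1 h.symm, hNK⟩, h2⟩
    by_cases hann : residuatedIdeal (⊥ : Submodule S M) = ⊥
    · by_cases hC : residuatedIdeal N' * residuatedIdeal K' = ⊥
      · by_cases hN'K' : N' = K'
        · subst hN'K'
          refine mid N' hN'N ?_ hA' hAA' ?_
          · intro h
            apply hAB
            rw [← h]
            exact hAA'
          · rw [mul_comm]
            exact hBB'
        · have hNK' : N ≠ K' := by
            intro h
            apply hAB
            rw [h, mul_comm]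
            exact hBB'
          have hN'K : N' ≠ K := by
            intro h
            apply hAB
            rw [← h]
            exact hAA'
          refine ⟨SimpleGraph.Walk.cons ((hG N N').mpr ⟨hN'N.symm, hA, hA', hAA'⟩)
            (SimpleGraph.Walk.cons ((hG N' K').mpr ⟨hN'K', hA', hB', hC⟩)
            (SimpleGraph.Walk.cons ((hG K' K).mpr ⟨hK'K, hB', hB,
              by rw [mul_comm]; exact hBB'⟩)
            SimpleGraph.Walk.nil)), ?_, by simp⟩
          simp [SimpleGraph.Walk.isPath_def]
          exact ⟨⟨fun h => hN'N h.symm, hNK', hNK⟩, ⟨hN'K', hN'K⟩, hK'K⟩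
      · set C : Ideal S := residuatedIdeal N' * residuatedIdeal K' with hCdef
        set W : Submodule S M := C • (⊤ : Submodule S M) with hWdef
        have hkill : ∀ s : S, (∀ c ∈ C, s * c = 0) → ∀ x ∈ W, s • x = 0 := by
          intro s hs x hx
          refine Submodule.smul_induction_on hx ?_ ?_
          · intro c hc m _
            rw [← mul_smul, hs c hc, zero_smul]
          · intro x y hx' hy'
            rw [smul_add, hx', hy', add_zero]
        have hmemW : ∀ X : Submodule S M, residuatedIdeal X * C = ⊥ →
            residuatedIdeal X * residuatedIdeal W = ⊥ := by
          intro X hX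
          rw [← le_bot_iff]
          refine Ideal.mul_le.mpr ?_
          intro a ha t ht
          rw [Ideal.mem_bot]
          have hmem : a * t ∈ residuatedIdeal (⊥ : Submodule S M) := by
            intro m
            rw [Submodule.mem_bot, mul_smul]
            refine hkill a ?_ (t • m) (ht m)
            intro c hc
            have h2 := Ideal.mul_mem_mul ha hc
            rw [hX] at h2
            exact Ideal.mem_bot.mp h2
          rw [hann] at hmem
          exact Ideal.mem_bot.mp hmem
        have hAC : residuatedIdeal N * C = ⊥ := by
          rw [hCdef, ← mul_assoc, hAA']; exact Submodule.bot_mul _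
        have hBC : residuatedIdeal K * C = ⊥ := by
          rw [hCdef, mul_comm (residuatedIdeal N') (residuatedIdeal K'),
            ← mul_assoc, hBB']; exact Submodule.bot_mul _
        have hAW := hmemW N hAC
        have hBW := hmemW K hBC
        obtain ⟨c, hcC, hc0⟩ := (Submodule.ne_bot_iff _).mp hC
        have hcW : c ∈ residuatedIdeal W := fun m =>
          Submodule.smul_mem_smul hcC Submodule.mem_top
        have hWne : residuatedIdeal W ≠ ⊥ := by
          intro h
          rw [h, Ideal.mem_bot] at hcW
          exact hc0 hcW
        refine mid W ?_ ?_ hWne hAW (by rw [mul_comm]; exact hBW)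
        · intro h
          apply hAB
          rw [← h, mul_comm]
          exact hBW
        · intro h
          apply hAB
          rw [← h]
          exact hAW
    · refine mid ⊥ ?_ ?_ hann ?_ ?_
      · intro h
        apply hAB
        rw [← le_bot_iff, mul_comm, ← hBB']
        refine Ideal.mul_mono_right ?_
        rw [← h]
        exact ann_le K'
      · intro h
        apply hAB
        rw [← le_bot_iff, ← hAA']
        refine Ideal.mul_mono_right ?_
        rw [← h]
        exact ann_le N'
      · rw [← le_bot_iff, ← hAA']
        exact Ideal.mul_mono_right (ann_le N')
      · rw [← le_bot_iff, mul_comm, ← hBB']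
        exact Ideal.mul_mono_right (ann_le K')
end

section
/- Let (S,·,0,1) be a commutative monoid with zero equipped with a partial order ≤ such that x ≤ y implies x·z ≤ y·z for all x, y, z ∈ S and 0 ≤ s for all s ∈ S. Suppose d ∈ S satisfies d ≠ 0, d ≠ 1, d·d = 0, and s ≤ d for every s ∈ S with s ≠ 0 and s ≠ 1 (d is the largest element of S∖{0,1}). Let X be a nonempty set and f : X → S a function such that the graph Γ_{(S,f)}(X) has at least two vertices. Then any two distinct vertices of Γ_{(S,f)}(X) are adjacent; in particular the diameter of Γ_{(S,f)}(X) equals 1. -/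
/-- Theorem: let `S` be a commutative monoid with zero carrying a partial
order compatible with multiplication in which `0` is the least element, and
suppose `d` is the largest element of `S ∖ {0, 1}` and satisfies `d * d = 0`.
If the graph `Γ_{(S,f)}(X)` has at least two vertices, then any two distinct
vertices of `Γ_{(S,f)}(X)` are adjacent; in particular its diameter is `1`. -/
theorem diam_eq_one_of_largest_square_zero
    {X S : Type*} [Nonempty X] [CommMonoidWithZero S] [PartialOrder S]
    (hcompat : ∀ x y z : S, x ≤ y → x * z ≤ y * z)
    (hzero_le : ∀ s : S, 0 ≤ s)
    (d : S) (hd0 : d ≠ 0) (hd1 : d ≠ 1) (hdsq : d * d = 0)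
    (hdmax : ∀ s : S, s ≠ 0 → s ≠ 1 → s ≤ d)
    (f : X → S)
    (G : SimpleGraph X)
    (hG : ∀ x y : X, G.Adj x y ↔ x ≠ y ∧ f x ≠ 0 ∧ f y ≠ 0 ∧ f x * f y = 0)
    (htwo : ∃ x y : X, x ≠ y ∧ IsVertexOf f x ∧ IsVertexOf f y) :
    ∀ x y : X, IsVertexOf f x → IsVertexOf f y → x ≠ y → G.Adj x y := by
  have key : ∀ x : X, IsVertexOf f x → f x ≤ d := by
    intro x hx
    obtain ⟨hx0, y, hyx, hy0, hxy⟩ := hx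
    refine hdmax _ hx0 ?_
    intro h1
    rw [h1, one_mul] at hxy
    exact hy0 hxy
  intro x y hx hy hxy
  rw [hG]
  refine ⟨hxy, hx.1, hy.1, le_antisymm ?_ (hzero_le _)⟩
  calc f x * f y ≤ d * f y := hcompat _ _ _ (key x hx)
    _ = f y * d := mul_comm _ _
    _ ≤ d * d := hcompat _ _ _ (key y hy)
    _ = 0 := hdsq
end

section
/- Let S be a commutative semiring with a nonzero identity and M a unital S-semimodule. Suppose 𝔪 is the only maximal ideal of S (every proper ideal of S is contained in 𝔪) and 𝔪² = (0). Consider the simple graph on Sub(M) in which distinct N, K are adjacent if and only if [N:M] ≠ (0), [K:M] ≠ (0), and [N:M]·[K:M] = (0); its vertices are the subsemimodules N with [N:M] ≠ (0) that are adjacent to some other subsemimodule. If this graph has at least two vertices, then any two distinct vertices are adjacent; in particular its diameter is 1. -/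
/-- Theorem: let `S` be a commutative semiring with a nonzero identity and `M`
a unital `S`-semimodule.  Suppose `𝔪` is the only maximal ideal of `S` and
`𝔪² = (0)`.  In the graph on `Sub(M)` in which distinct `N, K` are adjacent
iff `[N:M] ≠ (0)`, `[K:M] ≠ (0)` and `[N:M]·[K:M] = (0)`, if there are at
least two vertices, then any two distinct vertices are adjacent; in
particular the diameter of the graph is `1`. -/
theorem residuatedGraph_diam_eq_one_of_unique_maximal_square_zero
    {S M : Type*} [CommSemiring S] [Nontrivial S] [AddCommMonoid M] [Module S M]
    (𝔪 : Ideal S) (h𝔪 : 𝔪 ≠ ⊤) (h𝔪max : ∀ I : Ideal S, I ≠ ⊤ → I ≤ 𝔪)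
    (h𝔪sq : 𝔪 * 𝔪 = ⊥)
    (G : SimpleGraph (Submodule S M))
    (hG : ∀ N K : Submodule S M, G.Adj N K ↔ N ≠ K ∧ residuatedIdeal N ≠ ⊥ ∧
      residuatedIdeal K ≠ ⊥ ∧ residuatedIdeal N * residuatedIdeal K = ⊥)
    (htwo : ∃ N K : Submodule S M, N ≠ K ∧
      (residuatedIdeal N ≠ ⊥ ∧ ∃ N' : Submodule S M, N' ≠ N ∧
        residuatedIdeal N' ≠ ⊥ ∧ residuatedIdeal N * residuatedIdeal N' = ⊥) ∧
      (residuatedIdeal K ≠ ⊥ ∧ ∃ K' : Submodule S M, K' ≠ K ∧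
        residuatedIdeal K' ≠ ⊥ ∧ residuatedIdeal K * residuatedIdeal K' = ⊥)) :
    ∀ N K : Submodule S M,
      (residuatedIdeal N ≠ ⊥ ∧ ∃ N' : Submodule S M, N' ≠ N ∧
        residuatedIdeal N' ≠ ⊥ ∧ residuatedIdeal N * residuatedIdeal N' = ⊥) →
      (residuatedIdeal K ≠ ⊥ ∧ ∃ K' : Submodule S M, K' ≠ K ∧
        residuatedIdeal K' ≠ ⊥ ∧ residuatedIdeal K * residuatedIdeal K' = ⊥) →
      N ≠ K → G.Adj N K := by
  intro N K ⟨hN, N', hN'ne, hN', hprodN⟩ ⟨hK, K', hK'ne, hK', hprodK⟩ hNK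
  have key : ∀ (A B : Ideal S), B ≠ ⊥ → A * B = ⊥ → A ≤ 𝔪 := by
    intro A B hB hAB
    apply h𝔪max
    intro hA
    apply hB
    rw [hA, Ideal.top_mul] at hAB
    exact hAB
  have h1 : residuatedIdeal N ≤ 𝔪 := key _ _ hN' hprodN
  have h2 : residuatedIdeal K ≤ 𝔪 := key _ _ hK' hprodK
  rw [hG]
  refine ⟨hNK, hN, hK, le_bot_iff.mp ?_⟩
  calc residuatedIdeal N * residuatedIdeal K ≤ 𝔪 * 𝔪 := Ideal.mul_mono h1 h2
    _ = ⊥ := h𝔪sq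
end

section
/- Let X be a nonempty set, (S,·,0) a commutative semigroup with zero, and f : X → S a function such that the graph Γ_{(S,f)}(X) has at least three vertices and such that for every path a−x−b in Γ_{(S,f)}(X) one has N(a) ∩ N(b) ≠ {x}. If Γ_{(S,f)}(X) is connected on its vertices with diameter at most 3 (any two vertices are joined by a path of length at most 3), then every edge of Γ_{(S,f)}(X) is contained in a cycle of length at most 4; hence Γ_{(S,f)}(X) is a union of triangles and rectangles. -/
/-- A 4-cycle through four vertices. -/
lemma cycle4_aux {X : Type*} (G : SimpleGraph X) {a b c d : X}
    (hab : G.Adj a b) (hbc : G.Adj b c) (hcd : G.Adj c d) (hda : G.Adj d a)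
    (hac : a ≠ c) (hbd : b ≠ d) :
    ∃ p : G.Walk a a, p.IsCycle ∧ p.length ≤ 4 ∧ s(a, b) ∈ p.edges := by
  refine ⟨.cons hab (.cons hbc (.cons hcd (.cons hda .nil))), ?_, by simp, by simp⟩
  simp only [SimpleGraph.Walk.isCycle_def, SimpleGraph.Walk.isTrail_def]
  refine ⟨?_, by simp, ?_⟩
  · simp [Sym2.eq, Sym2.rel_iff', hab.ne, hbc.ne, hcd.ne, hda.ne, hac, hbd,
      hab.ne', hbc.ne', hcd.ne', hda.ne', hac.symm, hbd.symm]
  · simp [hab.ne', hbc.ne, hcd.ne, hda.ne, hbd, hac.symm, hda.ne']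

/-- From a set that is not `{y}` but contains `y`, extract an element
different from `y`. -/
lemma exists_ne_of_ne_singleton {X : Type*} {T : Set X} {y : X}
    (hne : T ≠ {y}) (hy : y ∈ T) : ∃ w ∈ T, w ≠ y := by
  by_contra hc
  push_neg at hc
  apply hne
  ext w
  exact ⟨fun hw => hc w hw, fun hw => hw ▸ hy⟩

/-- Theorem: let `Γ_{(S,f)}(X)` have at least three vertices, and suppose that
for every path `a − x − b` in `Γ_{(S,f)}(X)` we have `N(a) ∩ N(b) ≠ {x}`.
If any two vertices of `Γ_{(S,f)}(X)` are joined by a path of length at most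
`3`, then every edge of `Γ_{(S,f)}(X)` lies on a cycle of length at most `4`;
hence `Γ_{(S,f)}(X)` is a union of triangles and rectangles. -/
theorem edge_mem_cycle_length_le_four
    {X S : Type*} [Nonempty X] [SemigroupWithZero S]
    (hcomm : ∀ a b : S, a * b = b * a)
    (f : X → S)
    (G : SimpleGraph X)
    (hG : ∀ x y : X, G.Adj x y ↔ x ≠ y ∧ f x ≠ 0 ∧ f y ≠ 0 ∧ f x * f y = 0)
    (hthree : ∃ a b c : X, a ≠ b ∧ a ≠ c ∧ b ≠ c ∧
      IsVertexOf f a ∧ IsVertexOf f b ∧ IsVertexOf f c)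
    (hnbr : ∀ a x b : X, a ≠ x → x ≠ b → a ≠ b → G.Adj a x → G.Adj x b →
      G.neighborSet a ∩ G.neighborSet b ≠ {x})
    (hconn : ∀ x y : X, IsVertexOf f x → IsVertexOf f y →
      ∃ p : G.Walk x y, p.IsPath ∧ p.length ≤ 3) :
    ∀ a b : X, G.Adj a b →
      ∃ (u : X) (p : G.Walk u u), p.IsCycle ∧ p.length ≤ 4 ∧ s(a, b) ∈ p.edges := by
  intro x y hxy
  obtain ⟨hxy', hfx, hfy, hfxy⟩ := (hG x y).1 hxy
  have hvx : IsVertexOf f x := ⟨hfx, y, Ne.symm hxy', hfy, hfxy⟩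
  -- a vertex `v` with `v ≠ x`, `v ≠ y`
  obtain ⟨v, hvv, hvnx, hvny⟩ : ∃ v, IsVertexOf f v ∧ v ≠ x ∧ v ≠ y := by
    obtain ⟨a, b, c, hab, hac, hbc, hva, hvb, hvc⟩ := hthree
    by_cases h1 : a ≠ x ∧ a ≠ y
    · exact ⟨a, hva, h1.1, h1.2⟩
    by_cases h2 : b ≠ x ∧ b ≠ y
    · exact ⟨b, hvb, h2.1, h2.2⟩
    push_neg at h1 h2
    have h1' : a = x ∨ a = y := by tauto
    have h2' : b = x ∨ b = y := by tauto
    refine ⟨c, hvc, ?_, ?_⟩ <;>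
      rcases h1' with rfl | rfl <;> rcases h2' with rfl | rfl <;>
      first
        | exact Ne.symm hac
        | exact Ne.symm hbc
        | exact (hab rfl).elim
  -- a path from `v` to `x` of length ≤ 3, reversed: from `x` to `v`
  obtain ⟨p0, hp0, _⟩ := hconn v x hvv hvx
  obtain ⟨u, hxu, q', hq'eq⟩ :=
    SimpleGraph.Walk.exists_eq_cons_of_ne (Ne.symm hvnx) p0.reverse
  have hqpath : p0.reverse.IsPath := hp0.reverse
  rw [hq'eq, SimpleGraph.Walk.cons_isPath_iff] at hqpath
  by_cases huy : u = y
  · -- the neighbor of `x` on the path is `y`; take the next one, adjacent to `y`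
    subst huy
    obtain ⟨z, hyz, q'', hq''eq⟩ :=
      SimpleGraph.Walk.exists_eq_cons_of_ne (Ne.symm hvny) q'
    have hzx : z ≠ x := by
      intro h
      apply hqpath.2
      rw [hq''eq]
      rw [SimpleGraph.Walk.support_cons]
      exact List.mem_cons_of_mem _ (h ▸ q''.start_mem_support)
    have hne := hnbr x u z hxy' hyz.ne (Ne.symm hzx) hxy hyz
    have hymem : u ∈ G.neighborSet x ∩ G.neighborSet z := ⟨hxy, hyz.symm⟩
    obtain ⟨w, hwmem, hwy⟩ := exists_ne_of_ne_singleton hne hymem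
    obtain ⟨p, h1, h2, h3⟩ :=
      cycle4_aux G hxy hyz hwmem.2 hwmem.1.symm (Ne.symm hzx) (Ne.symm hwy)
    exact ⟨x, p, h1, h2, h3⟩
  · -- the neighbor `u` of `x` is not `y`
    have hne := hnbr y x u (Ne.symm hxy') hxu.ne (fun h => huy h.symm) hxy.symm hxu
    have hxmem : x ∈ G.neighborSet y ∩ G.neighborSet u := ⟨hxy.symm, hxu.symm⟩
    obtain ⟨w, hwmem, hwx⟩ := exists_ne_of_ne_singleton hne hxmem
    obtain ⟨p, h1, h2, h3⟩ :=
      cycle4_aux G hxy.symm hxu hwmem.2 hwmem.1.symm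
        (fun h => huy h.symm) (Ne.symm hwx)
    exact ⟨y, p, h1, h2, by rw [Sym2.eq_swap]; exact h3⟩
end

section
/- Let X be a nonempty set, (S,·,0) a commutative semigroup with zero, and f : X → S a function such that the graph Γ_{(S,f)}(X) has at least three vertices and such that for all x, y ∈ X, if f(x)·f(y) ≠ 0 then there exists z ∈ X with f(z) = f(x)·f(y). If Γ_{(S,f)}(X) contains a cycle, then every vertex of the core of Γ_{(S,f)}(X) (every vertex lying on some cycle of Γ_{(S,f)}(X)) lies on a cycle of length 3 or length 4; hence the core of Γ_{(S,f)}(X) is a union of triangles and rectangles. -/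
/-!
A cycle of length at least five through `a` contains a path `d – e – a – b – c` of distinct
vertices. Unless `a, b, e`, `a, b, c` or `a, d, e` is already a triangle, `f b * f e ≠ 0` is the
value `f z` of some vertex `z`; by commutativity `f z` is annihilated by everything annihilating
`f b` or `f e`, in particular by `f a`, `f c` and `f d`, so `a – b – c – z` (or `a – e – d – b`
when `z = b`) is a square.
-/

lemma mul_mul_eq_zero_of_or {S : Type*} [SemigroupWithZero S] (hcomm : ∀ a b : S, a * b = b * a)
    {a b s : S} (h : a * s = 0 ∨ b * s = 0) : a * b * s = 0 := by
  rcases h with h | h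
  · rw [mul_assoc, hcomm b, ← mul_assoc, h, zero_mul]
  · rw [mul_assoc, h, mul_zero]

namespace SimpleGraph

variable {X : Type*} {G : SimpleGraph X} {a b c d e : X}

def OnTriangleOrSquare (G : SimpleGraph X) (a : X) : Prop :=
  ∃ (u : X) (p : G.Walk u u), p.IsCycle ∧ (p.length = 3 ∨ p.length = 4) ∧ a ∈ p.support

lemma onTriangleOrSquare_of_triangle (hab : G.Adj a b) (hbc : G.Adj b c) (hca : G.Adj c a) :
    G.OnTriangleOrSquare a := by
  refine ⟨a, .cons hab (.cons hbc (.cons hca .nil)), ?_, by simp, by simp⟩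
  have := hab.ne; have := hbc.ne; have := hca.ne
  simp_all [Walk.cons_isCycle_iff, ne_comm]

lemma onTriangleOrSquare_of_square (hab : G.Adj a b) (hbc : G.Adj b c) (hcd : G.Adj c d)
    (hda : G.Adj d a) (hac : a ≠ c) (hbd : b ≠ d) : G.OnTriangleOrSquare a := by
  refine ⟨a, .cons hab (.cons hbc (.cons hcd (.cons hda .nil))), ?_, by simp, by simp⟩
  have := hab.ne; have := hbc.ne; have := hcd.ne; have := hda.ne
  simp_all [Walk.cons_isCycle_iff, ne_comm]

lemma Walk.IsCycle.exists_adj_chain_of_five_le_length {p : G.Walk a a} (hp : p.IsCycle)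
    (hlen : 5 ≤ p.length) :
    ∃ b c d e, G.Adj a b ∧ G.Adj b c ∧ G.Adj d e ∧ G.Adj e a ∧ [a, b, c, d, e].Nodup := by
  set n := p.length
  have hv : ∀ i < n, G.Adj (p.getVert i) (p.getVert (i + 1)) := fun i hi => p.adj_getVert_succ hi
  refine ⟨p.getVert 1, p.getVert 2, p.getVert (n - 2), p.getVert (n - 1), ?_, hv 1 (by omega),
    ?_, ?_, ?_⟩
  · simpa using hv 0 (by omega)
  · simpa [show n - 2 + 1 = n - 1 by omega] using hv (n - 2) (by omega)
  · simpa [show n - 1 + 1 = n by omega, n] using hv (n - 1) (by omega)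
  · have hindices : [n, 1, 2, n - 2, n - 1].Nodup := by simp; omega
    convert hindices.map_on fun i hi j hj hij => hp.getVert_injOn ?_ ?_ hij using 1
    · simp [n]
    all_goals simp at hi hj; simp; omega

lemma onTriangleOrSquare_of_adj_chain {S : Type*} [SemigroupWithZero S]
    (hcomm : ∀ a b : S, a * b = b * a) {f : X → S}
    (hf : ∀ x y : X, f x * f y ≠ 0 → ∃ z : X, f z = f x * f y)
    (hG : ∀ x y : X, G.Adj x y ↔ x ≠ y ∧ f x ≠ 0 ∧ f y ≠ 0 ∧ f x * f y = 0)
    (hab : G.Adj a b) (hbc : G.Adj b c) (hde : G.Adj d e) (hea : G.Adj e a)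
    (hac : a ≠ c) (had : a ≠ d) (hbe : b ≠ e) : G.OnTriangleOrSquare a := by
  have adj {x y : X} (hxy : x ≠ y) (hx : f x ≠ 0) (hy : f y ≠ 0) (h : f x * f y = 0) :
      G.Adj x y := (hG x y).2 ⟨hxy, hx, hy, h⟩
  obtain ⟨-, hfa, hfb, -⟩ := (hG a b).1 hab
  obtain ⟨-, -, hfc, hbc0⟩ := (hG b c).1 hbc
  obtain ⟨-, hfd, hfe, hde0⟩ := (hG d e).1 hde
  obtain ⟨-, -, -, hea0⟩ := (hG e a).1 hea
  by_cases hbe0 : f b * f e = 0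
  · exact onTriangleOrSquare_of_triangle hab (adj hbe hfb hfe hbe0) hea
  by_cases hca0 : f c * f a = 0
  · exact onTriangleOrSquare_of_triangle hab hbc (adj hac.symm hfc hfa hca0)
  by_cases hda0 : f d * f a = 0
  · exact onTriangleOrSquare_of_triangle (adj had.symm hfd hfa hda0).symm hde hea
  obtain ⟨z, hz⟩ := hf b e hbe0
  have hfz : f z ≠ 0 := hz ▸ hbe0
  have hann (x : X) (h : f b * f x = 0 ∨ f e * f x = 0) : f z * f x = 0 :=
    hz ▸ mul_mul_eq_zero_of_or hcomm h
  have hza0 := hann a (.inr hea0)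
  have hzc0 := hann c (.inl hbc0)
  have hzd0 := hann d (.inr (hcomm (f e) (f d) ▸ hde0))
  have hza : z ≠ a := by rintro rfl; exact hca0 (hcomm (f z) (f c) ▸ hzc0)
  have hzc : z ≠ c := by rintro rfl; exact hca0 hza0
  have hzd : z ≠ d := by rintro rfl; exact hda0 hza0
  have hza_adj : G.Adj z a := adj hza hfz hfa hza0
  by_cases hzb : z = b
  · exact onTriangleOrSquare_of_square hea.symm hde.symm (adj hzd hfz hfd hzd0).symm hza_adj had
      (hzb ▸ hbe.symm)
  · exact onTriangleOrSquare_of_square hab hbc (adj hzc hfz hfc hzc0).symm hza_adj hac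
      (Ne.symm hzb)

end SimpleGraph

open SimpleGraph in
theorem core_is_union_of_triangles_and_rectangles_general
    {X S : Type*} [SemigroupWithZero S]
    (hcomm : ∀ a b : S, a * b = b * a)
    (f : X → S)
    (hf : ∀ x y : X, f x * f y ≠ 0 → ∃ z : X, f z = f x * f y)
    (G : SimpleGraph X)
    (hG : ∀ x y : X, G.Adj x y ↔ x ≠ y ∧ f x ≠ 0 ∧ f y ≠ 0 ∧ f x * f y = 0) :
    ∀ a : X, (∃ (u : X) (p : G.Walk u u), p.IsCycle ∧ a ∈ p.support) →
      ∃ (u : X) (p : G.Walk u u), p.IsCycle ∧ (p.length = 3 ∨ p.length = 4) ∧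
        a ∈ p.support := by
  classical
  rintro a ⟨u, p, hp, ha⟩
  have hrot := hp.rotate ha
  by_cases hshort : (p.rotate a ha).length = 3 ∨ (p.rotate a ha).length = 4
  · exact ⟨a, _, hrot, hshort, Walk.start_mem_support _⟩
  obtain ⟨b, c, d, e, hab, hbc, hde, hea, hnodup⟩ :=
    hrot.exists_adj_chain_of_five_le_length (by have := hrot.three_le_length; omega)
  simp only [List.nodup_cons, List.mem_cons, List.not_mem_nil, or_false, not_or] at hnodup
  obtain ⟨⟨-, hac, had, -⟩, ⟨-, -, hbe⟩, -⟩ := hnodup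
  exact onTriangleOrSquare_of_adj_chain hcomm hf hG hab hbc hde hea hac had hbe

/-- Theorem: let `S` be a commutative semigroup with zero and `f : X → S` be
such that whenever `f x * f y ≠ 0` there is `z` with `f z = f x * f y`, and
suppose `Γ_{(S,f)}(X)` has at least three vertices.  If `Γ_{(S,f)}(X)`
contains a cycle, then every vertex lying on some cycle of `Γ_{(S,f)}(X)`
(i.e. every vertex of the core) lies on a cycle of length `3` or `4`; hence
the core of `Γ_{(S,f)}(X)` is a union of triangles and rectangles. -/
theorem core_is_union_of_triangles_and_rectangles
    {X S : Type*} [Nonempty X] [SemigroupWithZero S]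
    (hcomm : ∀ a b : S, a * b = b * a)
    (f : X → S)
    (hf : ∀ x y : X, f x * f y ≠ 0 → ∃ z : X, f z = f x * f y)
    (G : SimpleGraph X)
    (hG : ∀ x y : X, G.Adj x y ↔ x ≠ y ∧ f x ≠ 0 ∧ f y ≠ 0 ∧ f x * f y = 0)
    (hthree : ∃ a b c : X, a ≠ b ∧ a ≠ c ∧ b ≠ c ∧
      IsVertexOf f a ∧ IsVertexOf f b ∧ IsVertexOf f c)
    (hcycle : ∃ (u : X) (p : G.Walk u u), p.IsCycle) :
    ∀ a : X, (∃ (u : X) (p : G.Walk u u), p.IsCycle ∧ a ∈ p.support) →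
      ∃ (u : X) (p : G.Walk u u), p.IsCycle ∧ (p.length = 3 ∨ p.length = 4) ∧
        a ∈ p.support :=
  core_is_union_of_triangles_and_rectangles_general hcomm f hf G hG
end
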